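/- For every length n and computable time bound t there exist strings u and v of length n such that K(v) ≥ n - c₁, K(v|u) ≥ n - c₂, K(u|n) ≤ c₂, and K^t(u|v) ≥ n - c₁·log n - c₂, where c₁ is a constant independent of t and n, and c₂ depends on t but not on n. -/

import Mathlib

/-- Binary strings. -/
abbrev BStr := List Bool

/-- Canonical encoding of binary strings as natural numbers. -/
def strEnc : BStr → ℕ := Encodable.encode

/-- The fixed universal machine: program `p` (a natural number, decoded as a
partial recursive code) run on input `y`. -/
def univ (p y : ℕ) : Part ℕ := (Denumerable.ofNat Nat.Partrec.Code p).eval y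

/-- The length (in bits) of a program. -/
def plen (p : ℕ) : ℕ := Nat.size p

/-- Conditional Kolmogorov complexity on natural numbers: the length of the
shortest program producing `x` from `y` on the universal machine. -/
noncomputable def Knat (x y : ℕ) : ℕ :=
  sInf {n | ∃ p, plen p = n ∧ univ p y = Part.some x}

/-- Conditional Kolmogorov complexity `K(x|y)` of binary strings. -/
noncomputable def Kcond (x y : BStr) : ℕ := Knat (strEnc x) (strEnc y)

/-- `K(x|n)`: complexity of the string `x` conditioned on the canonical
encoding of the natural number `n`. -/
noncomputable def KcondNat (x : BStr) (n : ℕ) : ℕ := Knat (strEnc x) n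

/-- Unconditional Kolmogorov complexity `K(x) = K(x|ε)`. -/
noncomputable def K (x : BStr) : ℕ := Kcond x []

/-- The information distance `E(x,y) = max{K(x|y), K(y|x)}`. -/
noncomputable def E (x y : BStr) : ℕ := max (Kcond x y) (Kcond y x)

/-- The normalized information distance (NID). -/
noncomputable def NID (x y : BStr) : ℝ :=
  (E x y : ℝ) / (max (K x) (K y) : ℝ)

/-- Time-bounded universal machine: run program `p` on input `y` for at most
`t` steps. -/
def univT (t p y : ℕ) : Option ℕ :=
  Nat.Partrec.Code.evaln t (Denumerable.ofNat Nat.Partrec.Code p) y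

/-- Time-bounded conditional Kolmogorov complexity `K^t(x|y)` (with the time
bound measured in the length of the output `x`); `⊤` if no program succeeds. -/
noncomputable def KcondT (t : ℕ → ℕ) (x y : BStr) : ℕ∞ :=
  sInf {n : ℕ∞ | ∃ p : ℕ, (plen p : ℕ∞) = n ∧
    univT (t x.length) p (strEnc y) = some (strEnc x)}

/-- `K^t(x|n)`: time-bounded complexity conditioned on the natural number `n`. -/
noncomputable def KcondNatT (t : ℕ → ℕ) (x : BStr) (m : ℕ) : ℕ∞ :=
  sInf {n : ℕ∞ | ∃ p : ℕ, (plen p : ℕ∞) = n ∧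
    univT (t x.length) p m = some (strEnc x)}

/-- Time-bounded information distance `E^t`. -/
noncomputable def ET (t : ℕ → ℕ) (x y : BStr) : ℕ∞ :=
  max (KcondT t x y) (KcondT t y x)

/-- A real-valued function on naturals is upper semicomputable if it has a
total computable rational-valued approximation, nonincreasing in the stage,
converging to it. -/
def UpperSemicomputable (f : ℕ → ℝ) : Prop :=
  ∃ φ : ℕ → ℕ → ℚ, Computable₂ φ ∧ (∀ x k, φ x (k + 1) ≤ φ x k) ∧
    ∀ x, Filter.Tendsto (fun k => (φ x k : ℝ)) Filter.atTop (nhds (f x))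

/-- Lower semicomputability: `-f` is upper semicomputable. -/
def LowerSemicomputable (f : ℕ → ℝ) : Prop :=
  UpperSemicomputable (fun x => -f x)

/-- Upper semicomputability for real-valued functions of pairs of strings. -/
def UpperSemicomputable2 (f : BStr → BStr → ℝ) : Prop :=
  ∃ φ : BStr × BStr → ℕ → ℚ, Computable₂ φ ∧
    (∀ x k, φ x (k + 1) ≤ φ x k) ∧
    ∀ x : BStr × BStr,
      Filter.Tendsto (fun k => (φ x k : ℝ)) Filter.atTop (nhds (f x.1 x.2))

/-- Lower semicomputability for real-valued functions of pairs of strings. -/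
def LowerSemicomputable2 (f : BStr → BStr → ℝ) : Prop :=
  UpperSemicomputable2 (fun x y => -f x y)


/-- Upper semicomputability for real-valued functions of strings. -/
def UpperSemicomputableS (f : BStr → ℝ) : Prop :=
  ∃ φ : BStr → ℕ → ℚ, Computable₂ φ ∧ (∀ x k, φ x (k + 1) ≤ φ x k) ∧
    ∀ x, Filter.Tendsto (fun k => (φ x k : ℝ)) Filter.atTop (nhds (f x))

/-!
Put `m = n - log n - 1` and call a string `u` of length `n` rare if at most `2 ^ m` strings `w`
of length `n` yield `u` within `t n` steps by a program of at most `m` bits. A fixed `w` yields at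
most `2 ^ m` strings in this way, so by double counting a rare `u` exists, and the first one is
computable from `n`, whence `K(u|n) = O(1)`. Among the `2 ^ n` strings of length `n`, at most
`2 ^ (n - 2)` are among the `w` above, at most `2 ^ (n - 2)` have `K(v) ≤ n - 2` and at most
`2 ^ (n - 2)` have `K(v|u) ≤ n - 2`, so some `v` avoids all three; for it, every program computing
`u` from `v` within time `t n` has more than `m` bits.
-/

open scoped Finset

theorem Finset.card_le_of_forall_exists_lt {β : Type*} {s : Finset β} {M : ℕ} {R : ℕ → β → Prop}
    (hR : ∀ p b b', R p b → R p b' → b = b') (h : ∀ b ∈ s, ∃ p < M, R p b) : #s ≤ M := by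
  choose! f hfM hfR using h
  calc #s ≤ #(Finset.range M) :=
        Finset.card_le_card_of_injOn f (fun b hb => Finset.mem_range.2 (hfM b hb))
          fun b hb b' hb' he => hR _ _ _ (hfR b hb) (he ▸ hfR b' hb')
    _ = M := Finset.card_range M

theorem Finset.exists_card_filter_le {α : Type*} {s : Finset α} (hs : s.Nonempty)
    {r : α → α → Prop} [DecidableRel r] {M : ℕ} (h : ∀ b ∈ s, #{a ∈ s | r a b} ≤ M) :
    ∃ a ∈ s, #{b ∈ s | r a b} ≤ M := by
  by_contra! H
  have := Finset.card_mul_le_card_mul r (m := M + 1) (fun a ha => H a ha) h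
  nlinarith [hs.card_pos]

theorem List.Nodup.length_filter {α : Type*} [DecidableEq α] {l : List α} (hl : l.Nodup)
    (p : α → Prop) [DecidablePred p] : (l.filter (p ·)).length = #{a ∈ l.toFinset | p a} := by
  rw [← List.toFinset_card_of_nodup (hl.filter _), List.toFinset_filter]
  simp only [decide_eq_true_eq]

theorem List.headI_mem_of_mem {α : Type*} [Inhabited α] {l : List α} {a : α} (h : a ∈ l) :
    l.headI ∈ l := by
  cases l with
  | nil => simp at h
  | cons b l => exact List.mem_cons_self

def stringsOfLength : ℕ → List BStr
  | 0 => [[]]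
  | n + 1 => (stringsOfLength n).flatMap fun w => [false :: w, true :: w]

theorem mem_stringsOfLength {n : ℕ} {w : BStr} : w ∈ stringsOfLength n ↔ w.length = n := by
  induction n generalizing w with
  | zero => simp [stringsOfLength]
  | succ n ih =>
    cases w with
    | nil => simp [stringsOfLength]
    | cons b w => cases b <;> simp [stringsOfLength, ih]

theorem nodup_stringsOfLength (n : ℕ) : (stringsOfLength n).Nodup := by
  induction n with
  | zero => simp [stringsOfLength]
  | succ n ih =>
    refine List.nodup_flatMap.2
      ⟨fun w _ => by simp, ih.pairwise_of_forall_ne fun w _ w' _ hne => ?_⟩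
    simp [Function.onFun, hne.symm]

theorem card_toFinset_stringsOfLength (n : ℕ) : #(stringsOfLength n).toFinset = 2 ^ n := by
  rw [List.toFinset_card_of_nodup (nodup_stringsOfLength n)]
  induction n with
  | zero => rfl
  | succ n ih => simp [stringsOfLength, List.length_flatMap, ih, pow_succ]

theorem strEnc_injective : Function.Injective strEnc := Encodable.encode_injective

theorem univ_encode (c : Nat.Partrec.Code) (y : ℕ) : univ (Encodable.encode c) y = c.eval y := by
  rw [univ, Denumerable.ofNat_encode]

theorem Knat_le {x y p : ℕ} (h : univ p y = Part.some x) : Knat x y ≤ plen p :=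
  Nat.sInf_le ⟨p, rfl, h⟩

theorem exists_plen_eq_Knat (x y : ℕ) : ∃ p, plen p = Knat x y ∧ univ p y = Part.some x :=
  Nat.sInf_mem (s := {n | ∃ p, plen p = n ∧ univ p y = Part.some x})
    ⟨_, Encodable.encode (Nat.Partrec.Code.const x), rfl, by
      rw [univ_encode, Nat.Partrec.Code.eval_const]⟩

theorem card_filter_Knat_le (s : Finset BStr) (y m : ℕ) :
    #{w ∈ s | Knat (strEnc w) y ≤ m} ≤ 2 ^ m := by
  refine Finset.card_le_of_forall_exists_lt (R := fun p w => univ p y = Part.some (strEnc w))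
    (fun p w w' h h' => strEnc_injective (Part.some_inj.1 (h.symm.trans h'))) fun w hw => ?_
  obtain ⟨p, hp, hpw⟩ := exists_plen_eq_Knat (strEnc w) y
  exact ⟨p, Nat.size_le.1 (hp.trans_le (Finset.mem_filter.1 hw).2), hpw⟩

theorem exists_KcondNat_le_of_computable {f : ℕ → BStr} (hf : Computable f) :
    ∃ c, ∀ n, KcondNat (f n) n ≤ c := by
  obtain ⟨c, hc⟩ := Nat.Partrec.Code.exists_code.1
    (Partrec.nat_iff.1 (Primrec.encode.to_comp.comp hf))
  refine ⟨plen (Encodable.encode c), fun n => Knat_le ?_⟩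
  rw [univ_encode, hc]
  rfl

/-- The programs `p < 2 ^ m` are exactly those with `plen p ≤ m`. -/
def HasFastDescription (T m : ℕ) (u w : BStr) : Prop :=
  ∃ p < 2 ^ m, univT T p (strEnc w) = some (strEnc u)

instance (T m : ℕ) (u w : BStr) : Decidable (HasFastDescription T m u w) :=
  inferInstanceAs (Decidable (∃ p < 2 ^ m, _))

theorem card_filter_hasFastDescription_le (s : Finset BStr) (T m : ℕ) (w : BStr) :
    #{u ∈ s | HasFastDescription T m u w} ≤ 2 ^ m :=
  Finset.card_le_of_forall_exists_lt (R := fun p u => univT T p (strEnc w) = some (strEnc u))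
    (fun _ _ _ h h' => strEnc_injective (Option.some_inj.1 (h.symm.trans h')))
    fun _ hu => (Finset.mem_filter.1 hu).2

theorem succ_le_KcondT_of_not_hasFastDescription {t : ℕ → ℕ} {m : ℕ} {u v : BStr}
    (h : ¬HasFastDescription (t u.length) m u v) : ((m + 1 : ℕ) : ℕ∞) ≤ KcondT t u v :=
  le_sInf <| by
    rintro _ ⟨p, rfl, hp⟩
    exact Nat.cast_le.2 (Nat.lt_size.2 (not_lt.1 fun hp_lt => h ⟨p, hp_lt, hp⟩))

def rareTarget (n T m : ℕ) : BStr :=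
  ((stringsOfLength n).filter fun u =>
    ((stringsOfLength n).filter fun w => HasFastDescription T m u w).length ≤ 2 ^ m).headI

theorem rareTarget_spec (n T m : ℕ) : (rareTarget n T m).length = n ∧
    #{w ∈ (stringsOfLength n).toFinset | HasFastDescription T m (rareTarget n T m) w} ≤ 2 ^ m := by
  have hne : (stringsOfLength n).toFinset.Nonempty :=
    ⟨List.replicate n false, List.mem_toFinset.2 (mem_stringsOfLength.2 (List.length_replicate))⟩
  obtain ⟨u, hu, hcard⟩ := Finset.exists_card_filter_le hne
    fun w _ => card_filter_hasFastDescription_le _ T m w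
  have hmem : rareTarget n T m ∈ _ := List.headI_mem_of_mem <|
    List.mem_filter.2 ⟨List.mem_toFinset.1 hu, by
      rwa [decide_eq_true_eq, (nodup_stringsOfLength n).length_filter]⟩
  rw [List.mem_filter, decide_eq_true_eq, (nodup_stringsOfLength n).length_filter] at hmem
  exact ⟨mem_stringsOfLength.1 hmem.1, hmem.2⟩

section Primrec

open Primrec

theorem primrec_pow : Primrec₂ ((· ^ ·) : ℕ → ℕ → ℕ) := Primrec₂.unpaired'.1 Nat.Primrec.pow

theorem primrec_stringsOfLength : Primrec stringsOfLength := by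
  have hstep : Primrec₂ fun (_ : ℕ) (l : List BStr) => l.flatMap fun w => [false :: w, true :: w] :=
    (list_flatMap snd (list_cons.comp (list_cons.comp (const false) snd)
      (list_cons.comp (list_cons.comp (const true) snd) (const []))).to₂).to₂
  refine (nat_rec₁ [[]] hstep).of_eq fun n => ?_
  induction n with
  | zero => rfl
  | succ n ih => simp only [stringsOfLength, ← ih]

theorem primrec_nat_log {b : ℕ} (hb : 1 < b) : Primrec (Nat.log b) := by
  refine (nat_findGreatest (p := fun n k => b ^ k ≤ n) Primrec.id
    (nat_le.comp (primrec_pow.comp (const b) snd) fst)).of_eq fun n => ?_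
  refine Nat.findGreatest_eq_iff.2 ⟨Nat.log_le_self b n, fun h => Nat.pow_log_le_self b ?_, ?_⟩
  · rintro rfl; simp at h
  · intro k hk _ hle
    exact absurd hk (not_lt.2 (Nat.le_log_of_pow_le hb hle))

theorem primrec_univT : Primrec fun x : (ℕ × ℕ) × ℕ => univT x.1.1 x.1.2 x.2 :=
  Nat.Partrec.Code.primrec_evaln.comp
    (((fst.comp fst).pair ((Primrec.ofNat _).comp (snd.comp fst))).pair snd)

theorem primrecRel_hasFastDescription :
    PrimrecRel fun (w : BStr) (y : (ℕ × ℕ × ℕ) × BStr) =>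
      HasFastDescription y.1.2.1 y.1.2.2 y.2 w := by
  have hR : PrimrecRel fun (p : ℕ) (z : BStr × (ℕ × ℕ × ℕ) × BStr) =>
      univT z.2.1.2.1 p (strEnc z.1) = some (strEnc z.2.2) :=
    Primrec.eq.comp
      (primrec_univT.comp (((fst.comp (snd.comp (fst.comp (snd.comp snd)))).pair fst).pair
        (Primrec.encode.comp (fst.comp snd))))
      (option_some.comp (Primrec.encode.comp (snd.comp (snd.comp snd))))
  refine (hR.exists_mem_list.comp
    (list_range.comp (primrec_pow.comp (const 2) (snd.comp (snd.comp (fst.comp snd)))))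
    Primrec.id).of_eq fun z => ?_
  simp [HasFastDescription]

theorem primrec_rareTarget : Primrec fun x : ℕ × ℕ × ℕ => rareTarget x.1 x.2.1 x.2.2 := by
  have hcount : Primrec fun y : (ℕ × ℕ × ℕ) × BStr =>
      ((stringsOfLength y.1.1).filter fun w => HasFastDescription y.1.2.1 y.1.2.2 y.2 w).length :=
    list_length.comp (primrecRel_hasFastDescription.listFilter.comp
      (primrec_stringsOfLength.comp (fst.comp fst)) Primrec.id)
  have hrare : PrimrecRel fun (u : BStr) (x : ℕ × ℕ × ℕ) =>
      ((stringsOfLength x.1).filter fun w => HasFastDescription x.2.1 x.2.2 u w).length ≤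
        2 ^ x.2.2 :=
    nat_le.comp (hcount.comp (snd.pair fst)) (primrec_pow.comp (const 2) (snd.comp (snd.comp snd)))
  exact list_headI.comp (hrare.listFilter.comp (primrec_stringsOfLength.comp fst) Primrec.id)

end Primrec

theorem exists_incompressible_not_mem {n : ℕ} (hn : 2 ≤ n) (y₁ y₂ : ℕ) {B : Finset BStr}
    (hB : #B ≤ 2 ^ (n - 2)) : ∃ v : BStr, v.length = n ∧
      n - 2 < Knat (strEnc v) y₁ ∧ n - 2 < Knat (strEnc v) y₂ ∧ v ∉ B := by
  set S := (stringsOfLength n).toFinset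
  have hcard : #({w ∈ S | Knat (strEnc w) y₁ ≤ n - 2} ∪ {w ∈ S | Knat (strEnc w) y₂ ≤ n - 2} ∪ B)
      < #S := by
    have h₁ := card_filter_Knat_le S y₁ (n - 2)
    have h₂ := card_filter_Knat_le S y₂ (n - 2)
    have hS : #S = 2 ^ (n - 2) * 2 ^ 2 := by
      rw [card_toFinset_stringsOfLength, ← pow_add, Nat.sub_add_cancel hn]
    have hpos := Nat.two_pow_pos (n - 2)
    calc _ ≤ _ := Finset.card_union_le _ _
      _ ≤ _ := Nat.add_le_add_right (Finset.card_union_le _ _) _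
      _ < #S := by omega
  obtain ⟨v, hvS, hv⟩ := Finset.exists_mem_notMem_of_card_lt_card hcard
  simp only [Finset.mem_union, Finset.mem_filter, not_or, not_and, not_le] at hv
  exact ⟨v, mem_stringsOfLength.1 (List.mem_toFinset.1 hvS), hv.1.1 hvS, hv.1.2 hvS, hv.2⟩

theorem lemma_one :
    ∃ c₁ : ℕ, ∀ t : ℕ → ℕ, Computable t → ∃ c₂ : ℕ, ∀ n : ℕ,
      ∃ u v : BStr, u.length = n ∧ v.length = n ∧
        n - c₁ ≤ K v ∧
        n - c₂ ≤ Kcond v u ∧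
        KcondNat u n ≤ c₂ ∧
        ((n - c₁ * Nat.log 2 n - c₂ : ℕ) : ℕ∞) ≤ KcondT t u v := by
  refine ⟨1, fun t ht => ?_⟩
  have hm : Primrec fun n => n - Nat.log 2 n - 1 :=
    Primrec.nat_sub.comp (Primrec.nat_sub.comp .id (primrec_nat_log one_lt_two)) (.const 1)
  obtain ⟨c, hc⟩ := exists_KcondNat_le_of_computable <|
    primrec_rareTarget.to_comp.comp (Computable.id.pair (ht.pair hm.to_comp))
  refine ⟨c + 1, fun n => ?_⟩
  set m := n - Nat.log 2 n - 1
  set u := rareTarget n (t n) m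
  obtain ⟨hu_len, hu_rare⟩ := rareTarget_spec n (t n) m
  have hKu : KcondNat u n ≤ c + 1 := (hc n).trans c.le_succ
  obtain hn | hn := lt_or_ge n 2
  · have hlog : Nat.log 2 n = 0 := Nat.log_of_lt hn
    refine ⟨u, u, hu_len, hu_len, by omega, by omega, hKu, ?_⟩
    rw [show n - 1 * Nat.log 2 n - (c + 1) = 0 by omega, Nat.cast_zero]
    exact zero_le
  have hlog := Nat.log_pos one_lt_two hn
  obtain ⟨v, hv_len, hKv, hKvu, hv_rare⟩ :=
    exists_incompressible_not_mem hn (strEnc []) (strEnc u)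
      (hu_rare.trans (Nat.pow_le_pow_right two_pos (by omega)))
  have hKt : ((m + 1 : ℕ) : ℕ∞) ≤ KcondT t u v :=
    succ_le_KcondT_of_not_hasFastDescription fun h => hv_rare <| Finset.mem_filter.2
      ⟨List.mem_toFinset.2 (mem_stringsOfLength.2 hv_len), by rwa [hu_len] at h⟩
  exact ⟨u, v, hu_len, hv_len, by unfold K Kcond; omega, by unfold Kcond; omega, hKu,
    (Nat.cast_le.2 (by omega)).trans hKt⟩
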